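/- Let S be a finite involutory semigroup in which every idempotent e satisfies e ≤_J e*·e. Then there exists a positive integer n such that (e·e*)^n·e = e for every idempotent e ∈ S. -/
import Mathlib


/-- `a ≤_J b`: `a` lies in the two-sided ideal generated by `b`. -/
def leJ {S : Type*} [Semigroup S] (a b : S) : Prop :=
  a = b ∨ (∃ u, a = b * u) ∨ (∃ u, a = u * b) ∨ (∃ u v, a = u * b * v)

/-- `spow x N` is the `N`-th power of `x` in a semigroup, for `N ≥ 1`. -/
def spow {S : Type*} [Semigroup S] (x : S) : ℕ → S
  | 0 => x
  | 1 => x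
  | (n + 2) => spow x (n + 1) * x

section Aux

variable {S : Type*} [Semigroup S]

theorem spow_one' (x : S) : spow x 1 = x := rfl

theorem spow_succ' (x : S) {n : ℕ} (hn : 1 ≤ n) : spow x (n + 1) = spow x n * x := by
  match n, hn with
  | (n + 1), _ => rfl

theorem spow_comm' (x : S) (n : ℕ) : spow x n * x = x * spow x n := by
  cases n with
  | zero => rfl
  | succ m =>
    induction m with
    | zero => rfl
    | succ k ih =>
      calc spow x (k + 2) * x
          = (x * spow x (k + 1)) * x := by
            rw [show spow x (k + 2) = spow x (k + 1) * x from rfl, ih]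
        _ = x * (spow x (k + 1) * x) := mul_assoc _ _ _
        _ = x * spow x (k + 2) := rfl

theorem spow_add' (x : S) {m n : ℕ} (hm : 1 ≤ m) (hn : 1 ≤ n) :
    spow x (m + n) = spow x m * spow x n := by
  induction n, hn using Nat.le_induction with
  | base => exact spow_succ' x hm
  | succ n hn ih =>
    rw [show m + (n + 1) = (m + n) + 1 from rfl, spow_succ' x (by omega),
      ih, spow_succ' x hn, mul_assoc]

theorem spow_idem' {g : S} (hg : g * g = g) (n : ℕ) : spow g n = g := by
  cases n with
  | zero => rfl
  | succ m =>
    induction m with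
    | zero => rfl
    | succ k ih =>
      show spow g (k + 1) * g = g
      rw [ih, hg]

theorem mul_spow' {e x : S} (hx : e * x = x) (n : ℕ) : e * spow x n = spow x n := by
  cases n with
  | zero => exact hx
  | succ m =>
    induction m with
    | zero => exact hx
    | succ k ih =>
      show e * (spow x (k + 1) * x) = spow x (k + 1) * x
      rw [← mul_assoc, ih]

/-- In a finite semigroup, every element has an idempotent power, with
exponent bounded by `(card S)²`. -/
theorem exists_idem_pow [Finite S] (x : S) :
    ∃ m : ℕ, 1 ≤ m ∧ m ≤ (Nat.card S) ^ 2 ∧ spow x m * spow x m = spow x m := by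
  have := Fintype.ofFinite S
  set c := Nat.card S with hc
  have hcc : c = Fintype.card S := Nat.card_eq_fintype_card
  obtain ⟨i, j, hij, hfij⟩ :=
    Fintype.exists_ne_map_eq_of_card_lt
      (fun i : Fin (c + 1) => spow x ((i : ℕ) + 1))
      (by simp [← hcc])
  obtain ⟨a, b, ha1, hab, hble, hkey⟩ :
      ∃ a b : ℕ, 1 ≤ a ∧ a < b ∧ b ≤ c + 1 ∧ spow x a = spow x b := by
    rcases lt_or_gt_of_ne hij with hlt | hlt
    · exact ⟨(i : ℕ) + 1, (j : ℕ) + 1, by omega,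
        by exact_mod_cast Nat.add_lt_add_right hlt 1, by omega, hfij⟩
    · exact ⟨(j : ℕ) + 1, (i : ℕ) + 1, by omega,
        by exact_mod_cast Nat.add_lt_add_right hlt 1, by omega, hfij.symm⟩
  set p := b - a with hp
  have hp1 : 1 ≤ p := by omega
  have hpc : p ≤ c := by omega
  have hac : a ≤ c := by omega
  -- powers are eventually periodic with period p
  have hper : ∀ n, a ≤ n → spow x n = spow x (n + p) := by
    intro n hn
    induction n, hn using Nat.le_induction with
    | base => rw [show a + p = b by omega]; exact hkey
    | succ n hn ih =>
      rw [spow_succ' x (by omega), ih, ← spow_succ' x (by omega),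
        Nat.add_right_comm]
  have hper' : ∀ t n, a ≤ n → spow x n = spow x (n + t * p) := by
    intro t
    induction t with
    | zero => simp
    | succ t ih =>
      intro n hn
      rw [ih n hn, hper (n + t * p) (by omega),
        show n + t * p + p = n + (t + 1) * p by ring]
  have hm1 : 1 ≤ a * p := Nat.mul_pos ha1 hp1
  refine ⟨a * p, hm1, ?_, ?_⟩
  · calc a * p ≤ c * c := Nat.mul_le_mul hac hpc
      _ = c ^ 2 := (sq c).symm
  · rw [← spow_add' x hm1 hm1]
    refine (hper' a (a * p) ?_).symm
    calc a = a * 1 := (Nat.mul_one a).symm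
      _ ≤ a * p := Nat.mul_le_mul_left a hp1

/-- Key absorption trick: if `a = (r * a) * q` then some power of `r` fixes
`a` on the left. -/
theorem absorb [Finite S] {a r q : S} (h : a = (r * a) * q) :
    ∃ k : ℕ, 1 ≤ k ∧ spow r k * a = a := by
  have key : ∀ k, 1 ≤ k → a = (spow r k * a) * spow q k := by
    intro k hk
    induction k, hk using Nat.le_induction with
    | base => exact h
    | succ k hk ih =>
      calc a = (r * a) * q := h
        _ = (r * ((spow r k * a) * spow q k)) * q := by rw [← ih]
        _ = ((r * spow r k) * a) * (spow q k * q) := by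
            simp only [mul_assoc]
        _ = (spow r (k + 1) * a) * spow q (k + 1) := by
            rw [spow_succ' q hk, ← spow_comm' r k, ← spow_succ' r hk]
  obtain ⟨m, hm1, _, hmid⟩ := exists_idem_pow r
  refine ⟨m, hm1, ?_⟩
  calc spow r m * a = spow r m * ((spow r m * a) * spow q m) := by rw [← key m hm1]
    _ = ((spow r m * spow r m) * a) * spow q m := by simp only [mul_assoc]
    _ = (spow r m * a) * spow q m := by rw [hmid]
    _ = a := (key m hm1).symm

theorem bridge {e b : S} (he : e * e = e) :
    ∀ n, 1 ≤ n → spow (e * b) n * e = spow ((e * b) * e) n := by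
  have hex : e * ((e * b) * e) = (e * b) * e := by
    rw [← mul_assoc, ← mul_assoc, he]
  intro n hn
  induction n, hn using Nat.le_induction with
  | base => rfl
  | succ n hn ih =>
    calc spow (e * b) (n + 1) * e
        = (spow (e * b) n * (e * b)) * e := by rw [spow_succ' (e * b) hn]
      _ = spow (e * b) n * ((e * b) * e) := mul_assoc _ _ _
      _ = spow (e * b) n * (e * ((e * b) * e)) := by rw [hex]
      _ = (spow (e * b) n * e) * ((e * b) * e) := (mul_assoc _ _ _).symm
      _ = spow ((e * b) * e) n * ((e * b) * e) := by rw [ih]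
      _ = spow ((e * b) * e) (n + 1) := (spow_succ' _ hn).symm

theorem spow_cycle {e x : S} (he : e * e = e) {m : ℕ} (hm : 1 ≤ m)
    (hxm : spow x m = e) : ∀ q, 1 ≤ q → spow x (q * m) = e := by
  intro q hq
  induction q, hq using Nat.le_induction with
  | base => rw [one_mul, hxm]
  | succ q hq ih =>
    rw [show (q + 1) * m = q * m + m by ring,
      spow_add' x (Nat.mul_pos hq hm) hm, ih, hxm, he]

theorem left_pump {e s x : S} (he : e = s * x) (hx : x = s * (x * x)) :
    ∀ k, 1 ≤ k → e = spow s k * spow x k := by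
  have E : ∀ k, 1 ≤ k → s * (x * spow x k) = spow x k := by
    intro k hk
    induction k, hk using Nat.le_induction with
    | base => exact hx.symm
    | succ k hk ih =>
      calc s * (x * spow x (k + 1))
          = s * (x * (x * spow x k)) := by
            rw [spow_succ' x hk, spow_comm' x k]
        _ = s * ((x * x) * spow x k) := by rw [← mul_assoc x x]
        _ = (s * (x * x)) * spow x k := (mul_assoc _ _ _).symm
        _ = x * spow x k := by rw [← hx]
        _ = spow x (k + 1) := by rw [spow_succ' x hk, spow_comm' x k]
  intro k hk
  induction k, hk using Nat.le_induction with
  | base => exact he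
  | succ k hk ih =>
    refine Eq.trans ih ?_ |>.symm |>.symm
    calc spow s k * spow x k
        = spow s k * (s * (x * spow x k)) := by rw [E k hk]
      _ = (spow s k * s) * (x * spow x k) := (mul_assoc _ _ _).symm
      _ = spow s (k + 1) * (x * spow x k) := by rw [spow_succ' s hk]
      _ = spow s (k + 1) * (spow x k * x) := by rw [spow_comm' x k]
      _ = spow s (k + 1) * spow x (k + 1) := by rw [← spow_succ' x hk]

end Aux

section Star

variable {S : Type*} [Semigroup S] [StarMul S] [Finite S]

/-- Stability-type consequence: an idempotent `e` with `e ≤_J e* e` satisfies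
`e ∈ S (e*e)`. -/
theorem exists_left_factor (e : S) (he : e * e = e) (hJ : leJ e (star e * e)) :
    ∃ w : S, e = w * (star e * e) := by
  have hse : star e * star e = star e := by rw [← star_mul, he]
  rcases hJ with h1 | ⟨u, h2⟩ | ⟨u, h3⟩ | ⟨u, v, h4⟩
  · -- e = e* e ; then e* = e and w = e works
    have hst : star e = e := by
      have h5 : star e = star e * e := by
        conv_lhs => rw [h1]
        rw [star_mul, star_star]
      rw [h5, ← h1]
    refine ⟨e, ?_⟩
    have : e * (star e * e) = e := by rw [hst, he, he]
    exact this.symm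
  · -- e = (e* e) * u
    obtain ⟨k, hk1, hk⟩ := absorb (a := e) (r := star e) (q := u) h2
    rw [spow_idem' hse k] at hk
    -- hk : star e * e = e
    refine ⟨e, ?_⟩
    calc e = e * e := he.symm
      _ = e * (star e * e) := (congrArg (e * ·) hk).symm
  · exact ⟨u, h3⟩
  · -- e = u * (e* e) * v
    have h4' : e = ((u * star e) * e) * v := by
      rw [mul_assoc u (star e) e]; exact h4
    obtain ⟨k, hk1, hk⟩ := absorb (a := e) (r := u * star e) (q := v) h4'
    rcases Nat.lt_or_ge k 2 with hk2 | hk2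
    · have hk1' : k = 1 := by omega
      subst hk1'
      refine ⟨u, ?_⟩
      calc e = spow (u * star e) 1 * e := hk.symm
        _ = (u * star e) * e := rfl
        _ = u * (star e * e) := mul_assoc _ _ _
    · obtain ⟨j, rfl⟩ : ∃ j, k = j + 2 := ⟨k - 2, by omega⟩
      refine ⟨spow (u * star e) (j + 1) * u, ?_⟩
      calc e = spow (u * star e) (j + 2) * e := hk.symm
        _ = (spow (u * star e) (j + 1) * (u * star e)) * e := rfl
        _ = (spow (u * star e) (j + 1) * u) * (star e * e) := by
            simp only [mul_assoc]

end Star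

/-- If every idempotent `e` of a finite involutory semigroup satisfies
`e ≤_J e* e`, then for some positive `n` one has `(e e*)^n e = e` for all
idempotents `e`. -/
theorem pow_mul_idem_eq_idem {S : Type*} [Semigroup S] [StarMul S] [Finite S]
    (h : ∀ e : S, e * e = e → leJ e (star e * e)) :
    ∃ n : ℕ, 0 < n ∧ ∀ e : S, e * e = e → spow (e * star e) n * e = e := by
  refine ⟨Nat.factorial ((Nat.card S) ^ 2), Nat.factorial_pos _, ?_⟩
  intro e he
  set N := Nat.factorial ((Nat.card S) ^ 2) with hN
  have hse : star e * star e = star e := by rw [← star_mul, he]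
  obtain ⟨w, hw⟩ := exists_left_factor e he (h e he)
  obtain ⟨v, hv⟩ := exists_left_factor (star e) hse (h (star e) hse)
  rw [star_star] at hv
  -- hv : star e = v * (e * star e)
  set x := (e * star e) * e with hxdef
  set s := w * v with hsdef
  have hex : e * x = x := by
    rw [hxdef, ← mul_assoc, ← mul_assoc, he]
  have hesx : e = s * x := by
    calc e = w * (star e * e) := hw
      _ = w * ((v * (e * star e)) * e) := by rw [← hv]
      _ = s * x := by rw [hsdef, hxdef]; simp only [mul_assoc]
  have hxsxx : x = s * (x * x) := by
    calc x = e * x := hex.symm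
      _ = (s * x) * x := by rw [← hesx]
      _ = s * (x * x) := mul_assoc _ _ _
  obtain ⟨m, hm1, hm2, hmid⟩ := exists_idem_pow x
  -- the idempotent power of x equals e
  have hfe : spow x m = e := by
    have h1 : e * spow x m = spow x m := mul_spow' hex m
    have h2 : e = spow s m * spow x m := left_pump hesx hxsxx m hm1
    have h3 : e * spow x m = e := by
      calc e * spow x m = (spow s m * spow x m) * spow x m := by rw [← h2]
        _ = spow s m * (spow x m * spow x m) := mul_assoc _ _ _
        _ = spow s m * spow x m := by rw [hmid]
        _ = e := h2.symm
    rw [← h1, h3]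
  have hdvd : m ∣ N := Nat.dvd_factorial hm1 hm2
  have hNm : (N / m) * m = N := Nat.div_mul_cancel hdvd
  have hq1 : 1 ≤ N / m :=
    (Nat.one_le_div_iff hm1).mpr (Nat.le_of_dvd (Nat.factorial_pos _) hdvd)
  have hxN : spow x N = e := by
    rw [← hNm]; exact spow_cycle he hm1 hfe (N / m) hq1
  have hN1 : 1 ≤ N := Nat.factorial_pos _
  rw [bridge he N hN1, ← hxdef, hxN]
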